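/- For every t, k > 0 there exists n such that c^n a c^n b c^n ≈^t_k c^n b c^n a c^n, where ≈^t_k is the LTT equivalence; hence the language c*ac*bc* over {a,b,c} is not locally threshold testable. -/

import Mathlib

inductive ABC : Type
  | a | b | c
deriving DecidableEq

open ABC

/-- Number of occurrences of `v` in `w`. -/
def occ (w v : List ABC) : ℕ :=
  (List.range (w.length + 1)).countP (fun i => decide ((w.drop i).take v.length = v))

/-- Equality up to threshold `t`. -/
def thrEq (t i j : ℕ) : Prop := i = j ∨ (t ≤ i ∧ t ≤ j)

/-- The ordinary `(k,t)`-locally threshold testable equivalence. -/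
def LTT (k t : ℕ) (w w' : List ABC) : Prop :=
  (w.length < k ∧ w' = w) ∨
  (k ≤ w.length ∧ k ≤ w'.length ∧
    (∀ v : List ABC, v.length ≤ k → thrEq t (occ w v) (occ w' v)) ∧
    w.take (k - 1) = w'.take (k - 1) ∧
    (w.drop (w.length - (k - 1))) = (w'.drop (w'.length - (k - 1))))

/-!
A factor of length `m ≤ n` of `cⁿ x cⁿ y cⁿ` covers at most one of the two marked positions `n`
and `2n + 1`. Shifting by `n + 1` the windows that cover one of them therefore matches every
window of `cⁿ x cⁿ y cⁿ` with a window of `cⁿ y cⁿ x cⁿ` reading the same factor, so the two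
words have exactly the same factor counts; both also begin and end with `cⁿ`. For `n ≥ k` they
are thus `≈ᵗₖ`-equivalent, although only `cⁿ a cⁿ b cⁿ` lies in `c*ac*bc*`.
-/

open Finset

lemma take_drop_eq_iff_getD {α : Type*} (w v : List α) (d : α) {i : ℕ}
    (hi : i + v.length ≤ w.length) :
    (w.drop i).take v.length = v ↔ ∀ j < v.length, w.getD (i + j) d = v.getD j d := by
  rw [List.ext_getElem_iff]
  simp only [List.length_take, List.length_drop, List.getElem_take, List.getElem_drop]
  constructor
  · rintro ⟨-, h⟩ j hj
    rw [List.getD_eq_getElem _ _ (by omega), List.getD_eq_getElem _ _ hj, ← h j (by omega) hj]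
  · intro h
    refine ⟨by omega, fun j hj hj' => ?_⟩
    have := h j hj'
    rwa [List.getD_eq_getElem _ _ (by omega), List.getD_eq_getElem _ _ hj'] at this

lemma occ_eq_card (w v : List ABC) :
    occ w v = #{i ∈ range (w.length + 1 - v.length) |
      ∀ j < v.length, w.getD (i + j) c = v.getD j c} := by
  rw [occ, ← Nat.count, Nat.count_eq_card_filter_range]
  congr 1
  ext i
  simp only [mem_filter, mem_range]
  constructor
  · rintro ⟨hi, h⟩
    have hlen := congrArg List.length h
    simp only [List.length_take, List.length_drop] at hlen
    exact ⟨by omega, (take_drop_eq_iff_getD w v c (by omega)).1 h⟩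
  · rintro ⟨hi, h⟩
    exact ⟨by omega, (take_drop_eq_iff_getD w v c (by omega)).2 h⟩

def spaced (n : ℕ) (x y : ABC) : List ABC :=
  List.replicate n c ++ [x] ++ List.replicate n c ++ [y] ++ List.replicate n c

lemma length_spaced (n : ℕ) (x y : ABC) : (spaced n x y).length = 3 * n + 2 := by
  simp only [spaced, List.length_append, List.length_replicate, List.length_singleton]
  omega

lemma getD_spaced (n : ℕ) (x y : ABC) (i : ℕ) :
    (spaced n x y).getD i c = if i = n then x else if i = 2 * n + 1 then y else c := by
  simp only [spaced, List.getD_eq_getElem?_getD, List.getElem?_append, List.getElem?_replicate,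
    List.length_append, List.length_replicate, List.length_singleton, List.getElem?_singleton]
  split_ifs <;> first | omega | simp_all

lemma take_spaced (n : ℕ) (x y : ABC) {m : ℕ} (hm : m ≤ n) :
    (spaced n x y).take m = List.replicate m c := by
  simp [spaced, List.take_append, List.take_replicate, hm]

lemma drop_spaced (n : ℕ) (x y : ABC) {m : ℕ} (hm : m ≤ n) :
    (spaced n x y).drop (3 * n + 2 - m) = List.replicate m c := by
  have h : 3 * n + 2 - m =
      (List.replicate n c ++ [x] ++ List.replicate n c ++ [y]).length + (n - m) := by
    simp only [List.length_append, List.length_replicate, List.length_singleton]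
    omega
  rw [h, spaced, List.drop_length_add_append, List.drop_replicate, Nat.sub_sub_self hm]

/-- Exchanges the starting points of the length-`m` windows covering position `n` with those of
the windows covering position `2n + 1`. -/
def swapWindow (n m i : ℕ) : ℕ :=
  if n + 1 ≤ i + m ∧ i ≤ n then i + (n + 1)
  else if 2 * n + 2 ≤ i + m ∧ i ≤ 2 * n + 1 then i - (n + 1)
  else i

lemma swapWindow_involutive {n m : ℕ} (hm : m ≤ n) : (swapWindow n m).Involutive := by
  intro i
  unfold swapWindow
  split_ifs <;> omega

lemma getD_spaced_swapWindow {n m : ℕ} (hm : m ≤ n) (x y : ABC) (i : ℕ) {j : ℕ} (hj : j < m) :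
    (spaced n y x).getD (swapWindow n m i + j) c = (spaced n x y).getD (i + j) c := by
  rw [getD_spaced, getD_spaced]
  unfold swapWindow
  split_ifs <;> first | rfl | omega

lemma occ_spaced_swap (n : ℕ) (x y : ABC) {v : List ABC} (hv : v.length ≤ n) :
    occ (spaced n x y) v = occ (spaced n y x) v := by
  rw [occ_eq_card, occ_eq_card, length_spaced, length_spaced]
  refine card_equiv (swapWindow_involutive hv).toPerm fun i => ?_
  simp only [mem_filter, mem_range, Function.Involutive.coe_toPerm]
  refine and_congr ?_ (forall₂_congr fun j hj => by rw [getD_spaced_swapWindow hv x y i hj])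
  unfold swapWindow
  split_ifs <;> omega

lemma ltt_spaced_swap {k n : ℕ} (hk : k ≤ n) (t : ℕ) (x y : ABC) :
    LTT k t (spaced n x y) (spaced n y x) := by
  refine Or.inr ⟨?_, ?_, fun v hv => Or.inl (occ_spaced_swap n x y (hv.trans hk)), ?_, ?_⟩
  · rw [length_spaced]; omega
  · rw [length_spaced]; omega
  · rw [take_spaced n x y (by omega), take_spaced n y x (by omega)]
  · rw [length_spaced, length_spaced, drop_spaced n x y (by omega), drop_spaced n y x (by omega)]

lemma spaced_ba_ne (n i j l : ℕ) :
    spaced n b a ≠ List.replicate i c ++ [a] ++ List.replicate j c ++ [b] ++ List.replicate l c := by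
  intro h
  simpa [spaced] using congrArg (List.filter (· != c)) h

theorem cacbc_not_ltt :
    (∀ t k : ℕ, 0 < t → 0 < k → ∃ n : ℕ,
      LTT k t
        (List.replicate n c ++ [a] ++ List.replicate n c ++ [b] ++ List.replicate n c)
        (List.replicate n c ++ [b] ++ List.replicate n c ++ [a] ++ List.replicate n c)) ∧
    ¬ ∃ k t : ℕ, 0 < k ∧ 0 < t ∧
      ∀ w w' : List ABC, LTT k t w w' →
        (w ∈ {w : List ABC | ∃ i j l : ℕ,
            w = List.replicate i c ++ [a] ++ List.replicate j c ++ [b] ++ List.replicate l c} ↔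
         w' ∈ {w : List ABC | ∃ i j l : ℕ,
            w = List.replicate i c ++ [a] ++ List.replicate j c ++ [b] ++ List.replicate l c}) := by
  refine ⟨fun t k _ _ => ⟨k, ltt_spaced_swap le_rfl t a b⟩, ?_⟩
  rintro ⟨k, t, -, -, hL⟩
  obtain ⟨i, j, l, h⟩ := (hL _ _ (ltt_spaced_swap le_rfl t a b)).1 ⟨k, k, k, rfl⟩
  exact spaced_ba_ne k i j l h
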